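/- Let m be an odd positive integer, let G be an additively written commutative group, let ⟨·,·⟩ : G × G → ℚ be a biadditive map, and let A, I : ℤ/mℤ → G. With S^x(i) := ∑_{k=0}^{m-1} (−1)^k x(i+k), one has (1/2)·∑_{i∈ℤ/mℤ} ⟨I(i−1), S^A(i+1)⟩ − (1/2)·∑_{i∈ℤ/mℤ} ⟨I(i), S^A(i)⟩ = ∑_{i∈ℤ/mℤ} ⟨I(i−1), A(i) − A(i−1)⟩. -/
import Mathlib

def altSum {m : ℕ} {G : Type*} [AddCommGroup G] (x : ZMod m → G) (i : ZMod m) : G :=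
  ∑ k ∈ Finset.range m, ((-1 : ℤ) ^ k) • x (i + (k : ZMod m))

lemma altSum_succ {m : ℕ} (hm : Odd m) {G : Type*} [AddCommGroup G]
    (A : ZMod m → G) (i : ZMod m) : altSum A (i + 1) = 2 • A i - altSum A i := by
  have key : altSum A i + altSum A (i + 1) = 2 • A i := by
    unfold altSum
    have h1 : ∀ k ∈ Finset.range m, ((-1 : ℤ) ^ k) • A (i + 1 + (k : ZMod m))
        = -(((-1 : ℤ) ^ (k+1)) • A (i + ((k+1 : ℕ) : ZMod m))) := by
      intro k _
      push_cast
      rw [pow_succ]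
      simp [mul_comm]
      abel_nf
    rw [Finset.sum_congr rfl h1, Finset.sum_neg_distrib]
    have h2 : ∑ k ∈ Finset.range m, (((-1 : ℤ) ^ (k+1)) • A (i + ((k+1 : ℕ) : ZMod m)))
        = (∑ k ∈ Finset.range (m+1), ((-1 : ℤ) ^ k) • A (i + (k : ZMod m)))
          - ((-1 : ℤ) ^ 0) • A (i + ((0:ℕ) : ZMod m)) := by
      rw [Finset.sum_range_succ' (fun k => ((-1 : ℤ) ^ k) • A (i + (k : ZMod m))) m]
      abel
    rw [h2, Finset.sum_range_succ]
    have hm1 : ((-1 : ℤ) ^ m) = -1 := hm.neg_one_pow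
    have hmz : ((m : ℕ) : ZMod m) = 0 := ZMod.natCast_self m
    rw [hm1, hmz]
    simp [two_smul]
    abel
  rw [← key]; abel

/-- For odd positive `m`, a biadditive map `⟨·,·⟩ : G × G → ℚ` and `A I : ℤ/mℤ → G`,
`(1/2) ∑_{i ∈ ℤ/mℤ} ⟨I(i-1), S^A(i+1)⟩ - (1/2) ∑_{i ∈ ℤ/mℤ} ⟨I(i), S^A(i)⟩
  = ∑_{i ∈ ℤ/mℤ} ⟨I(i-1), A(i) - A(i-1)⟩`, with indices computed in `ℤ/mℤ`. -/
theorem simplification_l {m : ℕ} (hm : Odd m) (hm' : 0 < m)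
    {G : Type*} [AddCommGroup G] (b : G → G → ℚ)
    (hb_addl : ∀ x y z : G, b (x + y) z = b x z + b y z)
    (hb_addr : ∀ x y z : G, b x (y + z) = b x y + b x z)
    (A I : ZMod m → G) :
    (1 / 2 : ℚ) * ∑ i ∈ Finset.range m,
        b (I ((i : ZMod m) - 1)) (altSum A ((i : ZMod m) + 1))
      - (1 / 2 : ℚ) * ∑ i ∈ Finset.range m,
          b (I (i : ZMod m)) (altSum A (i : ZMod m))
      = ∑ i ∈ Finset.range m,
          b (I ((i : ZMod m) - 1)) (A (i : ZMod m) - A ((i : ZMod m) - 1)) := by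
  haveI : NeZero m := ⟨hm'.ne'⟩
  -- derived properties of b
  have hb0 : ∀ x : G, b x 0 = 0 := by
    intro x
    have := hb_addr x 0 0
    simpa using this.symm
  have hbneg : ∀ x y : G, b x (-y) = -(b x y) := by
    intro x y
    have := hb_addr x y (-y)
    simp [hb0] at this
    linarith
  have hbsub : ∀ x y z : G, b x (y - z) = b x y - b x z := by
    intro x y z
    rw [sub_eq_add_neg, hb_addr, hbneg]; ring
  -- range sums = univ sums over ZMod m
  have hconv : ∀ F : ZMod m → ℚ,
      ∑ i ∈ Finset.range m, F (i : ZMod m) = ∑ j : ZMod m, F j := by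
    intro F
    refine Finset.sum_nbij' (fun i => (i : ZMod m)) (fun j => j.val) ?_ ?_ ?_ ?_ ?_ <;>
      simp [ZMod.val_lt, ZMod.natCast_val, ZMod.val_natCast_of_lt, Nat.mod_eq_of_lt]
    exact fun a ha => Nat.mod_eq_of_lt ha
  rw [hconv (fun j => b (I (j - 1)) (altSum A (j + 1))),
      hconv (fun j => b (I j) (altSum A j)),
      hconv (fun j => b (I (j - 1)) (A j - A (j - 1)))]
  -- reindex second sum
  have hre : ∑ j : ZMod m, b (I j) (altSum A j)
      = ∑ j : ZMod m, b (I (j - 1)) (altSum A (j - 1)) :=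
    (Fintype.sum_equiv (Equiv.subRight (1 : ZMod m)) _ _ (fun j => rfl)).symm
  rw [hre, ← mul_sub, ← Finset.sum_sub_distrib]
  have hpt : ∀ j : ZMod m,
      b (I (j - 1)) (altSum A (j + 1)) - b (I (j - 1)) (altSum A (j - 1))
      = 2 * b (I (j - 1)) (A j - A (j - 1)) := by
    intro j
    have e1 : altSum A (j + 1) = 2 • A j - altSum A j := altSum_succ hm A j
    have e2 : altSum A j = 2 • A (j - 1) - altSum A (j - 1) := by
      have := altSum_succ hm A (j - 1)
      rwa [sub_add_cancel] at this
    have h2s : ∀ y : G, b (I (j-1)) (2 • y) = 2 * b (I (j-1)) y := by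
      intro y; rw [two_smul, hb_addr]; ring
    rw [e1, e2]
    simp only [hbsub, h2s]
    ring
  rw [Finset.sum_congr rfl (fun j _ => hpt j), ← Finset.mul_sum]
  ring
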